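/- Let M be the 3×3 block matrix over ℤ with blocks ((I, I, 0), (S, I, I), (R, 0, I)) where each block is (n−1)×(n−1), I is the identity, R has first row all 1's, and S has subdiagonal all 1's. Then det(M) = n. -/

import Mathlib

/-!
Taking Schur complements against the identity blocks, first the top-left one and then the
bottom-right one of what remains, reduces `det M` to `det (I - S + R)`. Every row of `S` but the
first sums to `1`, so `(I - S) 𝟙 = e₀` and `R = (I - S) 𝟙 𝟙ᵀ`, whence
`I - S + R = (I - S)(I + 𝟙 𝟙ᵀ)`. Here `I - S` is unitriangular and the matrix determinant lemma
gives `det (I + 𝟙 𝟙ᵀ) = 1 + (n - 1) = n`.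
-/

open Matrix

def Rmat (k : ℕ) : Matrix (Fin k) (Fin k) ℤ :=
  Matrix.of fun i _ => if (i : ℕ) = 0 then 1 else 0

def Smat (k : ℕ) : Matrix (Fin k) (Fin k) ℤ :=
  Matrix.of fun i j => if (i : ℕ) = (j : ℕ) + 1 then 1 else 0

/-- The 3×3 block matrix with rows of blocks (I, I, 0), (S, I, I), (R, 0, I),
each block of size (n-1)×(n-1). -/
def blockM (n : ℕ) : Matrix (Fin 3 × Fin (n - 1)) (Fin 3 × Fin (n - 1)) ℤ :=
  Matrix.of fun p q =>
    (![![(1 : Matrix (Fin (n - 1)) (Fin (n - 1)) ℤ), 1, 0],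
       ![Smat (n - 1), 1, 1],
       ![Rmat (n - 1), 0, 1]] p.1 q.1) p.2 q.2

def finThreeProdEquiv (ι : Type*) : Fin 3 × ι ≃ ι ⊕ (ι ⊕ ι) where
  toFun
    | (0, a) => .inl a
    | (1, a) => .inr (.inl a)
    | (2, a) => .inr (.inr a)
  invFun := Sum.elim (0, ·) (Sum.elim (1, ·) (2, ·))
  left_inv := by
    rintro ⟨i, a⟩
    fin_cases i <;> rfl
  right_inv := by
    rintro (a | a | a) <;> rfl

section BlockReduction

variable {R ι : Type*} [CommRing R] [Fintype ι] [DecidableEq ι]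

theorem det_of_blocks_eq_det_one_sub_add (A B : Matrix ι ι R) :
    (Matrix.of fun p q : Fin 3 × ι => ![![1, 1, 0], ![A, 1, 1], ![B, 0, 1]] p.1 q.1 p.2 q.2).det
      = (1 - A + B).det := by
  have hreindex :
      (Matrix.of fun p q : Fin 3 × ι => ![![1, 1, 0], ![A, 1, 1], ![B, 0, 1]] p.1 q.1 p.2 q.2)
        = (fromBlocks 1 (fromCols 1 0) (fromRows A B) (fromBlocks 1 1 0 1)).submatrix
            (finThreeProdEquiv ι) (finThreeProdEquiv ι) := by
    ext ⟨i, a⟩ ⟨j, b⟩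
    fin_cases i <;> fin_cases j <;> rfl
  rw [hreindex, det_submatrix_equiv_self, det_fromBlocks_one₁₁, fromRows_mul_fromCols]
  have hschur : fromBlocks 1 1 0 1 - fromBlocks (A * 1) (A * 0) (B * 1) (B * 0)
      = fromBlocks (1 - A) 1 (-B) (1 : Matrix ι ι R) := by
    ext (i | i) (j | j) <;> simp
  rw [hschur, det_fromBlocks_one₂₂, Matrix.one_mul, sub_neg_eq_add]

end BlockReduction

theorem det_one_add_vecMulVec {R m : Type*} [CommRing R] [Fintype m] [DecidableEq m]
    (u v : m → R) :
    (1 + vecMulVec u v).det = 1 + v ⬝ᵥ u := by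
  rw [vecMulVec_eq Unit, det_one_add_replicateCol_mul_replicateRow]

theorem one_sub_Smat_mulVec_one (k : ℕ) :
    (1 - Smat k) *ᵥ 1 = fun i : Fin k => if (i : ℕ) = 0 then 1 else 0 := by
  rw [sub_mulVec, one_mulVec]
  funext ⟨i, hi⟩
  simp only [Pi.sub_apply, Pi.one_apply, mulVec, dotProduct, mul_one]
  cases i with
  | zero => simp [Smat]
  | succ m =>
    have hS : ∀ l : Fin k, Smat k ⟨m + 1, hi⟩ l = if l = ⟨m, by omega⟩ then 1 else 0 := by
      intro l
      simp [Smat, Fin.ext_iff, eq_comm]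
    simp [hS]

theorem Rmat_eq_vecMulVec (k : ℕ) : Rmat k = vecMulVec ((1 - Smat k) *ᵥ 1) 1 := by
  ext i j
  simp [one_sub_Smat_mulVec_one, vecMulVec_apply, Rmat]

theorem det_one_sub_Smat (k : ℕ) : (1 - Smat k).det = 1 := by
  have hlower : (1 - Smat k).BlockTriangular OrderDual.toDual := by
    intro i j hij
    have hij' : (i : ℕ) < j := hij
    simp [Smat, one_apply, Fin.ext_iff, hij'.ne, show (i : ℕ) ≠ j + 1 by omega]
  rw [det_of_isLowerTriangular _ hlower]
  simp [Smat, one_apply]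

theorem det_one_sub_Smat_add_Rmat (k : ℕ) : (1 - Smat k + Rmat k).det = k + 1 := by
  have hfactor : 1 - Smat k + Rmat k = (1 - Smat k) * (1 + vecMulVec 1 1) := by
    rw [Rmat_eq_vecMulVec, Matrix.mul_add, Matrix.mul_one, mul_vecMulVec]
  rw [hfactor, det_mul, det_one_sub_Smat, det_one_add_vecMulVec]
  simp [add_comm]

theorem det_blockM (n : ℕ) (hn : 1 ≤ n) : (blockM n).det = n := by
  rw [blockM, det_of_blocks_eq_det_one_sub_add, det_one_sub_Smat_add_Rmat]
  omega
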